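/- With the notation above (two probability measures μᵣ, μₛ; hypotheses h₁, h₂; labeling function f; risks εᵣ, εₛ), if Δεₛ ≥ |μᵣ − μₛ|(A), where A = {x : h₁(x) ≠ h₂(x) ∧ (h₁(x) ≠ f(x) ∨ h₂(x) ≠ f(x))}, then Δεᵣ ≥ 0; i.e., the error ranking of the two hypotheses is preserved from the synthetic distribution to the real distribution. -/

import Mathlib

open MeasureTheory

/-!
Write `E₁`, `E₂` for the error sets of `h₁`, `h₂` and `ν = μr - μs`. Then
`Δεr - Δεs = ν E₂ - ν E₁ = ν (E₂ \ E₁) - ν (E₁ \ E₂)`, which is at least `-|ν| (E₁ ∆ E₂)`.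
Since `E₁ ∆ E₂ ⊆ A`, the gap `Δεs ≥ |ν| A` absorbs this change of the error difference.
-/

theorem MeasureTheory.VectorMeasure.sub_apply_eq_sub_apply_sdiff {α M : Type*}
    [MeasurableSpace α] [AddCommGroup M] [TopologicalSpace M] [T2Space M]
    (v : VectorMeasure α M) {E F : Set α} (hE : MeasurableSet E) (hF : MeasurableSet F) :
    v F - v E = v (F \ E) - v (E \ F) := by
  rw [← Set.sdiff_inter_self_eq_sdiff (s := F) (t := E), ← Set.sdiff_self_inter (s := E) (t := F),
    VectorMeasure.of_sdiff (hE.inter hF) hF Set.inter_subset_right,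
    VectorMeasure.of_sdiff (hE.inter hF) hE Set.inter_subset_left]
  abel

theorem MeasureTheory.SignedMeasure.abs_sub_apply_le_totalVariation_symmDiff {α : Type*}
    [MeasurableSpace α] (s : SignedMeasure α) {E F : Set α}
    (hE : MeasurableSet E) (hF : MeasurableSet F) :
    |s F - s E| ≤ s.totalVariation.real (symmDiff E F) := by
  rw [s.sub_apply_eq_sub_apply_sdiff hE hF, Set.symmDiff_def, Set.union_comm,
    measureReal_union disjoint_sdiff_sdiff (hE.diff hF)]
  calc |s (F \ E) - s (E \ F)| ≤ |s (F \ E)| + |s (E \ F)| := abs_sub _ _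
    _ ≤ _ := add_le_add (s.norm_le_totalVariation _) (s.norm_le_totalVariation _)

theorem MeasureTheory.Measure.sub_le_sub_add_totalVariation_symmDiff {α : Type*}
    [MeasurableSpace α] (μ ν : Measure α) [IsFiniteMeasure μ] [IsFiniteMeasure ν]
    {E F : Set α} (hE : MeasurableSet E) (hF : MeasurableSet F) :
    ν.real F - ν.real E ≤ μ.real F - μ.real E +
      (μ.toSignedMeasure - ν.toSignedMeasure).totalVariation.real (symmDiff E F) := by
  have h := (abs_le.mp
    ((μ.toSignedMeasure - ν.toSignedMeasure).abs_sub_apply_le_totalVariation_symmDiff hE hF)).1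
  rw [toSignedMeasure_sub_apply hE, toSignedMeasure_sub_apply hF] at h
  linarith

theorem symmDiff_setOf_ne_subset {Ω Y : Type*} (f h₁ h₂ : Ω → Y) :
    symmDiff {x | h₁ x ≠ f x} {x | h₂ x ≠ f x} ⊆
      {x | h₁ x ≠ h₂ x ∧ (h₁ x ≠ f x ∨ h₂ x ≠ f x)} := by
  rintro x (⟨h1, h2⟩ | ⟨h2, h1⟩) <;> simp_all [eq_comm]

theorem rank_preservation_local_general {Ω Y : Type*} [MeasurableSpace Ω]
    (μr μs : Measure Ω) [IsProbabilityMeasure μr] [IsProbabilityMeasure μs]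
    (f h₁ h₂ : Ω → Y)
    (hm1 : MeasurableSet {x | h₁ x ≠ f x})
    (hm2 : MeasurableSet {x | h₂ x ≠ f x})
    (hgap : (μs {x | h₂ x ≠ f x}).toReal - (μs {x | h₁ x ≠ f x}).toReal ≥
      ((μr.toSignedMeasure - μs.toSignedMeasure).totalVariation
        {x | h₁ x ≠ h₂ x ∧ (h₁ x ≠ f x ∨ h₂ x ≠ f x)}).toReal) :
    (μr {x | h₂ x ≠ f x}).toReal - (μr {x | h₁ x ≠ f x}).toReal ≥ 0 := by
  have htransfer := μr.sub_le_sub_add_totalVariation_symmDiff μs hm1 hm2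
  have hmono : (μr.toSignedMeasure - μs.toSignedMeasure).totalVariation.real
      (symmDiff {x | h₁ x ≠ f x} {x | h₂ x ≠ f x}) ≤
      (μr.toSignedMeasure - μs.toSignedMeasure).totalVariation.real
        {x | h₁ x ≠ h₂ x ∧ (h₁ x ≠ f x ∨ h₂ x ≠ f x)} :=
    measureReal_mono (symmDiff_setOf_ne_subset f h₁ h₂)
  simp only [measureReal_def] at htransfer hmono
  linarith

theorem rank_preservation_local {Ω Y : Type*} [MeasurableSpace Ω]
    (μr μs : Measure Ω) [IsProbabilityMeasure μr] [IsProbabilityMeasure μs]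
    (f h₁ h₂ : Ω → Y)
    (hm1 : MeasurableSet {x | h₁ x ≠ f x})
    (hm2 : MeasurableSet {x | h₂ x ≠ f x})
    (hm12 : MeasurableSet {x | h₁ x ≠ h₂ x})
    (hgap : (μs {x | h₂ x ≠ f x}).toReal - (μs {x | h₁ x ≠ f x}).toReal ≥
      ((μr.toSignedMeasure - μs.toSignedMeasure).totalVariation
        {x | h₁ x ≠ h₂ x ∧ (h₁ x ≠ f x ∨ h₂ x ≠ f x)}).toReal) :
    (μr {x | h₂ x ≠ f x}).toReal - (μr {x | h₁ x ≠ f x}).toReal ≥ 0 :=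
  rank_preservation_local_general μr μs f h₁ h₂ hm1 hm2 hgap
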